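/- arXiv:2008.09149 — 5 statements merged into one kernel-verified Lean document; each statement's English description precedes it below -/
import Mathlib

section
/- For the bilinear game f(x,y) = xᵀCy with C a full-rank matrix, the gradient descent-ascent update (x_{k+1}, y_{k+1}) = (x_k - η C y_k, y_k + η Cᵀ x_k) satisfies ‖(x_{k+1}, y_{k+1})‖² ≥ (1 + η² λ_min(C Cᵀ)) ‖(x_k, y_k)‖² for every step size η > 0. -/
/-!
The cross terms `∓ 2η xᵀCy` cancel, so one step adds exactly `η² (‖Cy‖² + ‖Cᵀx‖²)` to the
squared norm. Both terms are Rayleigh quotients: `‖Cᵀx‖² = xᵀ(CCᵀ)x ≥ λ_min(CCᵀ) ‖x‖²` and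
`‖Cy‖² = yᵀ(CᵀC)y ≥ λ_min(CᵀC) ‖y‖²`, and `CᵀC`, `CCᵀ` have the same characteristic polynomial,
hence the same eigenvalues.
-/

open Matrix

namespace Matrix

variable {m n : Type*} [Fintype m] [Fintype n]

-- Conjugating by the eigenvector unitary turns `A - c • 1` into `diagonal (eigenvalues - c)`.
theorem IsHermitian.posSemidef_sub_smul_one [DecidableEq n] {A : Matrix n n ℝ}
    (hA : A.IsHermitian) {c : ℝ} (hc : ∀ i, c ≤ hA.eigenvalues i) : (A - c • 1).PosSemidef := by
  have hc1 : c • (1 : Matrix n n ℝ) =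
      Unitary.conjStarAlgAut ℝ _ hA.eigenvectorUnitary (c • 1) := by
    simp
  rw [hA.spectral_theorem, hc1, ← map_sub, Unitary.conjStarAlgAut_apply,
    Unitary.isUnit_coe.posSemidef_star_right_conjugate_iff, ← diagonal_one, ← diagonal_smul,
    diagonal_sub, posSemidef_diagonal_iff]
  intro i
  simpa using hc i

theorem IsHermitian.iInf_eigenvalues_mul_dotProduct_le [DecidableEq n] {A : Matrix n n ℝ}
    (hA : A.IsHermitian) (z : n → ℝ) : (⨅ i, hA.eigenvalues i) * (z ⬝ᵥ z) ≤ z ⬝ᵥ A *ᵥ z := by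
  have hle : ∀ i, ⨅ j, hA.eigenvalues j ≤ hA.eigenvalues i :=
    ciInf_le (Set.finite_range _).bddBelow
  have := (hA.posSemidef_sub_smul_one hle).dotProduct_mulVec_nonneg z
  simp only [star_trivial, sub_mulVec, smul_mulVec, one_mulVec, dotProduct_sub, dotProduct_smul,
    smul_eq_mul] at this
  linarith

theorem eigenvalues_mul_conjTranspose_self_eq {𝕜 : Type*} [RCLike 𝕜] [DecidableEq n]
    (C : Matrix n n 𝕜) :
    (isHermitian_mul_conjTranspose_self C).eigenvalues =
      (isHermitian_conjTranspose_mul_self C).eigenvalues :=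
  (IsHermitian.eigenvalues_eq_eigenvalues_iff _ _).mpr (charpoly_mul_comm _ _)

theorem iInf_eigenvalues_conjTranspose_mul_self_mul_le [DecidableEq n] (C : Matrix m n ℝ)
    (y : n → ℝ) :
    (⨅ i, (isHermitian_conjTranspose_mul_self C).eigenvalues i) * (y ⬝ᵥ y) ≤
      C *ᵥ y ⬝ᵥ C *ᵥ y := by
  have h := (isHermitian_conjTranspose_mul_self C).iInf_eigenvalues_mul_dotProduct_le y
  refine h.trans_eq ?_
  rw [conjTranspose_eq_transpose_of_trivial, ← mulVec_mulVec, dotProduct_transpose_mulVec]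

theorem iInf_eigenvalues_mul_conjTranspose_self_mul_le [DecidableEq m] (C : Matrix m n ℝ)
    (x : m → ℝ) :
    (⨅ i, (isHermitian_mul_conjTranspose_self C).eigenvalues i) * (x ⬝ᵥ x) ≤
      Cᵀ *ᵥ x ⬝ᵥ Cᵀ *ᵥ x := by
  have h := (isHermitian_mul_conjTranspose_self C).iInf_eigenvalues_mul_dotProduct_le x
  refine h.trans_eq ?_
  rw [conjTranspose_eq_transpose_of_trivial, ← mulVec_mulVec, dotProduct_mulVec, ← mulVec_transpose]

end Matrix

theorem gda_step_dotProduct_self {m n : Type*} [Fintype m] [Fintype n] (C : Matrix m n ℝ) (η : ℝ)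
    (x : m → ℝ) (y : n → ℝ) :
    (x - η • C *ᵥ y) ⬝ᵥ (x - η • C *ᵥ y) + (y + η • Cᵀ *ᵥ x) ⬝ᵥ (y + η • Cᵀ *ᵥ x) =
      x ⬝ᵥ x + y ⬝ᵥ y + η ^ 2 * (C *ᵥ y ⬝ᵥ C *ᵥ y + Cᵀ *ᵥ x ⬝ᵥ Cᵀ *ᵥ x) := by
  have hcross : y ⬝ᵥ Cᵀ *ᵥ x = x ⬝ᵥ C *ᵥ y := dotProduct_transpose_mulVec C y x
  simp only [sub_dotProduct, dotProduct_sub, add_dotProduct, dotProduct_add, smul_dotProduct,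
    dotProduct_smul, smul_eq_mul, dotProduct_comm (C *ᵥ y) x, dotProduct_comm (Cᵀ *ᵥ x) y, hcross]
  ring

theorem gda_bilinear_norm_growth_general (M : ℕ) (C : Matrix (Fin M) (Fin M) ℝ)
    (η : ℝ) (x y : Fin M → ℝ)
    (x' y' : Fin M → ℝ)
    (hx' : x' = x - η • C.mulVec y)
    (hy' : y' = y + η • Cᵀ.mulVec x) :
    (1 + η ^ 2 * ⨅ i, (Matrix.isHermitian_mul_conjTranspose_self C).eigenvalues i) *
        ((∑ i, x i ^ 2) + ∑ i, y i ^ 2) ≤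
      (∑ i, x' i ^ 2) + ∑ i, y' i ^ 2 := by
  set lam := ⨅ i, (isHermitian_mul_conjTranspose_self C).eigenvalues i
  have hx : lam * (x ⬝ᵥ x) ≤ Cᵀ *ᵥ x ⬝ᵥ Cᵀ *ᵥ x :=
    iInf_eigenvalues_mul_conjTranspose_self_mul_le C x
  have hy : lam * (y ⬝ᵥ y) ≤ C *ᵥ y ⬝ᵥ C *ᵥ y := by
    simpa only [lam, eigenvalues_mul_conjTranspose_self_eq] using
      iInf_eigenvalues_conjTranspose_mul_self_mul_le C y
  have hsq (v : Fin M → ℝ) : ∑ i, v i ^ 2 = v ⬝ᵥ v := by simp only [dotProduct, sq]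
  subst hx' hy'
  rw [hsq, hsq, hsq, hsq, gda_step_dotProduct_self]
  calc (1 + η ^ 2 * lam) * (x ⬝ᵥ x + y ⬝ᵥ y)
      = x ⬝ᵥ x + y ⬝ᵥ y + η ^ 2 * (lam * (y ⬝ᵥ y) + lam * (x ⬝ᵥ x)) := by ring
    _ ≤ _ := by gcongr

/-- For the bilinear game `f(x,y) = xᵀCy` with `C` full rank, the GDA update
`x' = x - η C y`, `y' = y + η Cᵀ x` satisfies
`‖(x',y')‖² ≥ (1 + η² λ_min(CCᵀ)) ‖(x,y)‖²` for every `η > 0`. -/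
theorem gda_bilinear_norm_growth (M : ℕ) (C : Matrix (Fin M) (Fin M) ℝ)
    (hC : IsUnit C.det) (η : ℝ) (hη : 0 < η) (x y : Fin M → ℝ)
    (x' y' : Fin M → ℝ)
    (hx' : x' = x - η • C.mulVec y)
    (hy' : y' = y + η • Cᵀ.mulVec x) :
    (1 + η ^ 2 * ⨅ i, (Matrix.isHermitian_mul_conjTranspose_self C).eigenvalues i) *
        ((∑ i, x i ^ 2) + ∑ i, y i ^ 2) ≤
      (∑ i, x' i ^ 2) + ∑ i, y' i ^ 2 :=
  gda_bilinear_norm_growth_general M C η x y x' y' hx' hy'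
end

section
/- Consider the bilinear game f(x,y) = xᵀy on ℝ^M × ℝ^M. Let P = P_k = ∇_x f(x_k,y_k) = y_k and Q = Q_k = ∇_y f(x_k,y_k) = x_k be one-dimensional subspace directions, and let (α, β) be the solution of the subspace saddle-point problem min_α max_β f(x_k + αP_k, y_k + βQ_k), given by α = -(QᵀP)⁻¹Qᵀx_k and β = -(PᵀQ)⁻¹Pᵀy_k. Then, provided f(x_k,y_k) ≠ 0, the update x_{k+1} = x_k + ηPα, y_{k+1} = y_k + ηQβ satisfies ‖x_{k+1}‖² < ‖x_k‖² and ‖y_{k+1}‖² < ‖y_k‖² for every η ∈ (0, 2f(x_k,y_k)²/(‖P‖²‖Q‖²)). -/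
open Matrix Finset

lemma sum_expand {M : ℕ} (x y : Fin M → ℝ) (t : ℝ) :
    (∑ i, (x i + t * y i) ^ 2) =
      (∑ i, x i ^ 2) + 2 * t * (x ⬝ᵥ y) + t ^ 2 * ∑ i, y i ^ 2 := by
  have : ∀ i, (x i + t * y i) ^ 2 =
      x i ^ 2 + 2 * t * (x i * y i) + t ^ 2 * y i ^ 2 := fun i => by ring
  simp only [this, Finset.sum_add_distrib, dotProduct, ← Finset.mul_sum]

lemma keyreal (a b c η : ℝ) (ha : 0 < a) (hb : 0 < b) (hc : c ≠ 0)
    (hη : 0 < η) (hη' : η < 2 * c ^ 2 / (b * a)) :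
    a + 2 * (η * (-a / c)) * c + (η * (-a / c)) ^ 2 * b < a := by
  have hc2 : (0:ℝ) < c ^ 2 := by positivity
  have h : η * (b * a) < 2 * c ^ 2 := by
    rw [lt_div_iff₀ (mul_pos hb ha)] at hη'; linarith
  have e : 2 * (η * (-a / c)) * c = -(2 * η * a) := by
    field_simp
  have e2 : (η * (-a / c)) ^ 2 * b = η ^ 2 * a ^ 2 * b / c ^ 2 := by
    field_simp
  rw [e, e2]
  have : η ^ 2 * a ^ 2 * b / c ^ 2 < 2 * η * a := by
    rw [div_lt_iff₀ hc2]
    nlinarith [mul_lt_mul_of_pos_left h (mul_pos hη ha)]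
  linarith

/-- Theorem 3.1 (convergent part): for the bilinear game `f(x,y) = ⟨x,y⟩`, with
subspace directions `P = ∇ₓf = y`, `Q = ∇_y f = x` and subspace-optimal coefficients
`α = -(QᵀP)⁻¹Qᵀx`, `β = -(PᵀQ)⁻¹Pᵀy`, the update `x' = x + ηαP`, `y' = y + ηβQ`
strictly decreases both norms for every `η ∈ (0, 2 f(x,y)² / (‖P‖²‖Q‖²))`. -/
theorem subspace_bilinear_converges (M : ℕ) (x y : Fin M → ℝ)
    (hf : x ⬝ᵥ y ≠ 0)
    (P Q : Fin M → ℝ) (hP : P = y) (hQ : Q = x)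
    (α β : ℝ)
    (hα : α = -(Q ⬝ᵥ x) / (Q ⬝ᵥ P))
    (hβ : β = -(P ⬝ᵥ y) / (P ⬝ᵥ Q))
    (η : ℝ) (hη : 0 < η)
    (hη' : η < 2 * (x ⬝ᵥ y) ^ 2 / ((∑ i, P i ^ 2) * ∑ i, Q i ^ 2))
    (x' y' : Fin M → ℝ)
    (hx' : x' = x + (η * α) • P)
    (hy' : y' = y + (η * β) • Q) :
    (∑ i, x' i ^ 2) < (∑ i, x i ^ 2) ∧ (∑ i, y' i ^ 2) < ∑ i, y i ^ 2 := by
  subst hx' hy'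
  rw [hP, hQ] at hα hβ hη' ⊢
  have hxne : x ≠ 0 := by rintro rfl; simp at hf
  have hyne : y ≠ 0 := by rintro rfl; simp at hf
  have hapos : 0 < ∑ i, x i ^ 2 := by
    obtain ⟨i, hi⟩ := Function.ne_iff.mp hxne
    exact Finset.sum_pos' (fun j _ => sq_nonneg _)
      ⟨i, Finset.mem_univ i, by exact pow_pos (abs_pos.mpr hi) 2 |>.trans_le (by rw [sq_abs])⟩
  have hbpos : 0 < ∑ i, y i ^ 2 := by
    obtain ⟨i, hi⟩ := Function.ne_iff.mp hyne
    exact Finset.sum_pos' (fun j _ => sq_nonneg _)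
      ⟨i, Finset.mem_univ i, by exact pow_pos (abs_pos.mpr hi) 2 |>.trans_le (by rw [sq_abs])⟩
  have hxx : x ⬝ᵥ x = ∑ i, x i ^ 2 := by simp [dotProduct, sq]
  have hyy : y ⬝ᵥ y = ∑ i, y i ^ 2 := by simp [dotProduct, sq]
  have hyx : y ⬝ᵥ x = x ⬝ᵥ y := dotProduct_comm y x
  constructor
  · have hs : ∀ i, (x + (η * α) • y) i = x i + (η * α) * y i := fun i => rfl
    simp only [hs]
    rw [sum_expand]
    rw [hα, hxx]
    exact keyreal _ _ _ η hapos hbpos hf hη hη'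
  · have hs : ∀ i, (y + (η * β) • x) i = y i + (η * β) * x i := fun i => rfl
    simp only [hs]
    rw [sum_expand]
    rw [hβ, hyy]
    refine keyreal _ _ _ η hbpos hapos (by rwa [hyx]) hη ?_
    rw [hyx]
    calc η < 2 * (x ⬝ᵥ y) ^ 2 / ((∑ i, y i ^ 2) * ∑ i, x i ^ 2) := hη'
    _ = 2 * (x ⬝ᵥ y) ^ 2 / ((∑ i, x i ^ 2) * ∑ i, y i ^ 2) := by rw [mul_comm (∑ i, y i ^ 2)]
end

section
/- For the bilinear game f(x,y)=⟨x,y⟩ with subspace directions P = y_k, Q = x_k and subspace-optimal coefficients, the change in ‖x‖² after one step with step size η equals (‖Q‖²/⟨Q,P⟩²)·(-2η⟨Q,P⟩² + η²‖P‖²‖Q‖²); this quantity is strictly negative if and only if 0 < η < 2⟨x_k,y_k⟩²/(‖x_k‖²‖y_k‖²). -/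
/-!
Along `x + t • y` the squared norm is the quadratic `‖x‖² + 2t⟨x,y⟩ + t²‖y‖²` in `t`. For the
step `t = -η‖x‖²/⟨x,y⟩` the change factors with the prefactor `‖x‖²/⟨x,y⟩² > 0` (since
`⟨x,y⟩ ≠ 0` forces `x, y ≠ 0`), so its sign is that of `η (η‖x‖²‖y‖² - 2⟨x,y⟩²)`, a quadratic
in `η` that is negative exactly between its roots.
-/

open Matrix Finset

section SumSq

variable {ι R : Type*} [Fintype ι]

theorem sum_sq_add_smul [CommRing R] (x y : ι → R) (t : R) :
    ∑ i, (x + t • y) i ^ 2 = ∑ i, x i ^ 2 + 2 * t * (x ⬝ᵥ y) + t ^ 2 * ∑ i, y i ^ 2 := by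
  simp only [dotProduct, mul_sum, ← sum_add_distrib, Pi.add_apply, Pi.smul_apply, smul_eq_mul]
  exact sum_congr rfl fun i _ => by ring

theorem sum_sq_pos_of_ne_zero [CommRing R] [LinearOrder R] [IsStrictOrderedRing R]
    {v : ι → R} (hv : v ≠ 0) : 0 < ∑ i, v i ^ 2 := by
  have hdot : ∑ i, v i ^ 2 = v ⬝ᵥ v := by simp only [dotProduct, sq]
  refine (sum_nonneg fun i _ => sq_nonneg (v i)).lt_of_ne ?_
  rw [hdot]
  exact fun h => hv (dotProduct_self_eq_zero.mp h.symm)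

end SumSq

theorem neg_two_mul_add_sq_mul_neg_iff {K : Type*} [Field K] [LinearOrder K]
    [IsStrictOrderedRing K] {η k m : K} (hm : 0 < m) (hk : 0 < k) :
    -2 * η * k + η ^ 2 * m < 0 ↔ 0 < η ∧ η < 2 * k / m := by
  have hfactor : -2 * η * k + η ^ 2 * m = η * (η * m - 2 * k) := by ring
  rw [hfactor, mul_neg_iff, sub_neg, sub_pos, ← lt_div_iff₀ hm, ← div_lt_iff₀ hm]
  constructor
  · rintro (h | ⟨hη, hlt⟩)
    · exact h
    · exact absurd (hη.trans (div_pos (by positivity) hm)) hlt.not_gt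
  · exact Or.inl

/-- For the bilinear game `f(x,y)=⟨x,y⟩` with subspace directions `P = y`, `Q = x`
and subspace-optimal coefficient `α = -⟨Q,x⟩/⟨Q,P⟩`, the change in `‖x‖²` after one
step of size `η` equals `(‖Q‖²/⟨Q,P⟩²)·(-2η⟨Q,P⟩² + η²‖P‖²‖Q‖²)`, and this quantity
is strictly negative iff `0 < η < 2⟨x,y⟩²/(‖x‖²‖y‖²)`. -/
theorem subspace_bilinear_step_identity (M : ℕ) (x y : Fin M → ℝ)
    (hf : x ⬝ᵥ y ≠ 0)
    (P Q : Fin M → ℝ) (hP : P = y) (hQ : Q = x)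
    (α : ℝ) (hα : α = -(Q ⬝ᵥ x) / (Q ⬝ᵥ P))
    (η : ℝ)
    (x' : Fin M → ℝ) (hx' : x' = x + (η * α) • P) :
    (∑ i, x' i ^ 2) - (∑ i, x i ^ 2) =
      ((∑ i, Q i ^ 2) / (Q ⬝ᵥ P) ^ 2) *
        (-2 * η * (Q ⬝ᵥ P) ^ 2 + η ^ 2 * (∑ i, P i ^ 2) * ∑ i, Q i ^ 2) ∧
    ((∑ i, x' i ^ 2) - (∑ i, x i ^ 2) < 0 ↔
      (0 < η ∧ η < 2 * (x ⬝ᵥ y) ^ 2 / ((∑ i, x i ^ 2) * ∑ i, y i ^ 2))) := by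
  subst P Q x' α
  have hx : 0 < ∑ i, x i ^ 2 := sum_sq_pos_of_ne_zero fun h => hf (by simp [h])
  have hy : 0 < ∑ i, y i ^ 2 := sum_sq_pos_of_ne_zero fun h => hf (by simp [h])
  have hxx : x ⬝ᵥ x = ∑ i, x i ^ 2 := by simp only [dotProduct, sq]
  have hident : ∑ i, (x + (η * (-(x ⬝ᵥ x) / (x ⬝ᵥ y))) • y) i ^ 2 - ∑ i, x i ^ 2 =
      (∑ i, x i ^ 2) / (x ⬝ᵥ y) ^ 2 *
        (-2 * η * (x ⬝ᵥ y) ^ 2 + η ^ 2 * (∑ i, y i ^ 2) * ∑ i, x i ^ 2) := by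
    rw [sum_sq_add_smul, hxx]
    field_simp
    ring
  refine ⟨hident, ?_⟩
  rw [hident, ← smul_eq_mul, smul_neg_iff_of_pos_left (div_pos hx (by positivity)),
    mul_assoc (η ^ 2), mul_comm (∑ i, y i ^ 2)]
  exact neg_two_mul_add_sq_mul_neg_iff (mul_pos hx hy) (by positivity)
end

section
/- Let f: ℝ^M × ℝ^N → ℝ be twice continuously differentiable and let z = (x,y) be a point where ∇_{xx} f(z) is positive definite and ∇_{yy} f(z) is negative definite. Let g_x = ∇_x f(z), g_y = ∇_y f(z). Then the direction d = (-g_x, g_y) satisfies ∇f(z)ᵀ ∇²f(z) d = -g_xᵀ ∇_{xx}f(z) g_x + g_yᵀ ∇_{yy}f(z) g_y, i.e. the cross-terms involving ∇_{xy}f(z) cancel, and this quantity is strictly negative whenever ∇f(z) ≠ 0. -/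
open Matrix Finset

/-- At a point `z = (x,y)` where the Hessian of a C² function has blocks
`Hxx = ∇ₓₓf(z) ≻ 0`, `Hyy = ∇_yy f(z) ≺ 0` and cross block `Hxy = ∇ₓy f(z)`
(with `∇_yx f = Hxyᵀ` by symmetry of the Hessian), the descent-ascent direction
`d = (-gₓ, g_y)` built from the gradient `g = (gₓ, g_y)` satisfies
`gᵀ (∇²f(z)) d = -gₓᵀ Hxx gₓ + g_yᵀ Hyy g_y`: the cross terms cancel, and the
quantity is strictly negative whenever `g ≠ 0`. -/
theorem descent_ascent_direction_cancellation (M N : ℕ)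
    (Hxx : Matrix (Fin M) (Fin M) ℝ) (Hyy : Matrix (Fin N) (Fin N) ℝ)
    (Hxy : Matrix (Fin M) (Fin N) ℝ)
    (hxx : Hxx.PosDef) (hyy : (-Hyy).PosDef)
    (gx : Fin M → ℝ) (gy : Fin N → ℝ)
    (H : Matrix (Fin M ⊕ Fin N) (Fin M ⊕ Fin N) ℝ)
    (hH : H = Matrix.fromBlocks Hxx Hxy Hxyᵀ Hyy)
    (g d : Fin M ⊕ Fin N → ℝ)
    (hg : g = Sum.elim gx gy) (hd : d = Sum.elim (-gx) gy) :
    g ⬝ᵥ H.mulVec d = -(gx ⬝ᵥ Hxx.mulVec gx) + gy ⬝ᵥ Hyy.mulVec gy ∧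
    (g ≠ 0 → g ⬝ᵥ H.mulVec d < 0) := by
  have key : g ⬝ᵥ H.mulVec d = -(gx ⬝ᵥ Hxx.mulVec gx) + gy ⬝ᵥ Hyy.mulVec gy := by
    subst hH hg hd
    have cross : gy ⬝ᵥ Hxyᵀ.mulVec gx = gx ⬝ᵥ Hxy.mulVec gy := by
      rw [dotProduct_mulVec, vecMul_transpose, dotProduct_comm]
    simp [fromBlocks_mulVec, sumElim_dotProduct_sumElim, mulVec_add,
      dotProduct_add, mulVec_neg, dotProduct_neg, cross]
  refine ⟨key, fun hne => ?_⟩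
  rw [key]
  have hyyle : gy ⬝ᵥ Hyy.mulVec gy ≤ 0 := by
    have := hyy.posSemidef.dotProduct_mulVec_nonneg gy
    simp only [neg_mulVec, dotProduct_neg, star_trivial] at this
    linarith
  have hxxle : 0 ≤ gx ⬝ᵥ Hxx.mulVec gx := by
    have := hxx.posSemidef.dotProduct_mulVec_nonneg gx
    simpa using this
  have hcase : gx ≠ 0 ∨ gy ≠ 0 := by
    by_contra h
    push_neg at h
    apply hne
    subst hg
    funext i
    cases i <;> simp [h.1, h.2]
  rcases hcase with h | h
  · have := hxx.dotProduct_mulVec_pos h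
    simp only [star_trivial] at this
    linarith
  · have := hyy.dotProduct_mulVec_pos h
    simp only [neg_mulVec, dotProduct_neg, star_trivial] at this
    linarith
end

section
/- Let f: ℝ^M × ℝ^N → ℝ be C² on a neighborhood of a stable saddle point (x*,y*) (∇f(x*,y*) = 0, ∇_{xx}f(x*,y*) ≻ 0, ∇_{yy}f(x*,y*) ≺ 0). Then there is a radius r > 0 and constant c > 0 such that for all z in the ball B((x*,y*), r), the descent-ascent direction d(z) = (-∇_x f(z), ∇_y f(z)) satisfies ∇f(z)ᵀ∇²f(z)d(z) ≤ -c‖∇f(z)‖². -/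
/-!
The diagonal Hessian blocks at `z*` are definite on finite-dimensional spaces, hence coercive
(compactness of the unit sphere) with constants `μₓ`, `μ_y`; by continuity of the Hessian `H`
they stay coercive, with constants reduced by `ε = min μₓ μ_y / 2`, on a small ball. Writing
`∇f(z) = a + b` with `a`, `b` its orthogonal `x`- and `y`-parts, the descent-ascent direction is
`-a + b`, and the symmetry of `H` cancels the cross terms:
`⟪a + b, H (-a + b)⟫ = -⟪a, H a⟫ + ⟪b, H b⟫ ≤ -c (‖a‖² + ‖b‖²) = -c ‖a + b‖²`.
-/

open scoped RealInnerProductSpace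
open InnerProductSpace Topology

theorem isCoercive_of_pos {F : Type*} [NormedAddCommGroup F] [NormedSpace ℝ F]
    [FiniteDimensional ℝ F] (B : F →L[ℝ] F →L[ℝ] ℝ) (hB : ∀ u ≠ 0, 0 < B u u) :
    IsCoercive B := by
  rcases subsingleton_or_nontrivial F with hF | hF
  · exact ⟨1, one_pos, fun u => by simp [Subsingleton.elim u 0]⟩
  obtain ⟨u₀, hu₀, hmin⟩ := (isCompact_sphere (0 : F) 1).exists_isMinOn
    (NormedSpace.sphere_nonempty.mpr zero_le_one)
    (B.continuous.clm_apply continuous_id).continuousOn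
  refine ⟨B u₀ u₀, hB u₀ (ne_zero_of_mem_unit_sphere ⟨u₀, hu₀⟩), fun u => ?_⟩
  rcases eq_or_ne u 0 with rfl | hu
  · simp
  have hnorm : 0 < ‖u‖ := norm_pos_iff.2 hu
  have hsphere : ‖u‖⁻¹ • u ∈ Metric.sphere (0 : F) 1 := by
    simp [norm_smul, hnorm.ne']
  have hle : B u₀ u₀ ≤ ‖u‖⁻¹ * (‖u‖⁻¹ * B u u) := by
    simpa only [Set.mem_ofPred_eq, id, map_smul, smul_apply, smul_eq_mul] using hmin hsphere
  calc B u₀ u₀ * ‖u‖ * ‖u‖ ≤ ‖u‖⁻¹ * (‖u‖⁻¹ * B u u) * ‖u‖ * ‖u‖ := by gcongr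
    _ = B u u := by field_simp

section InnerProductSpace

variable {E : Type*} [NormedAddCommGroup E] [InnerProductSpace ℝ E]

theorem Submodule.exists_pos_mul_sq_norm_le_inner_apply_self (K : Submodule ℝ E)
    [FiniteDimensional ℝ K] (T : E →L[ℝ] E) (hT : ∀ u ∈ K, u ≠ 0 → 0 < ⟪u, T u⟫) :
    ∃ μ > 0, ∀ u ∈ K, μ * ‖u‖ ^ 2 ≤ ⟪u, T u⟫ := by
  obtain ⟨μ, hμ, hB⟩ := isCoercive_of_pos
    ((innerSL ℝ).bilinearComp K.subtypeL (T ∘L K.subtypeL))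
    fun u hu => hT u u.2 (by simpa using hu)
  exact ⟨μ, hμ, fun u hu => by simpa [sq, mul_assoc] using hB ⟨u, hu⟩⟩

theorem LinearMap.exists_pos_mul_sq_norm_le_inner_apply_self {F : Type*} [AddCommGroup F]
    [Module ℝ F] [FiniteDimensional ℝ F] (J : F →ₗ[ℝ] E) (T : E →L[ℝ] E)
    (hT : ∀ u ≠ 0, 0 < ⟪J u, T (J u)⟫) : ∃ μ > 0, ∀ u, μ * ‖J u‖ ^ 2 ≤ ⟪J u, T (J u)⟫ := by
  obtain ⟨μ, hμ, h⟩ := (LinearMap.range J).exists_pos_mul_sq_norm_le_inner_apply_self T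
    (by rintro _ ⟨u, rfl⟩ hu; exact hT u (by rintro rfl; exact hu J.map_zero))
  exact ⟨μ, hμ, fun u => h _ ⟨u, rfl⟩⟩

theorem le_inner_apply_self_of_norm_sub_le {T A : E →L[ℝ] E} {w : E} {μ ε : ℝ}
    (hA : μ * ‖w‖ ^ 2 ≤ ⟪w, A w⟫) (hTA : ‖T - A‖ ≤ ε) :
    (μ - ε) * ‖w‖ ^ 2 ≤ ⟪w, T w⟫ := by
  have hdiff : |⟪w, (T - A) w⟫| ≤ ε * ‖w‖ ^ 2 :=
    calc |⟪w, (T - A) w⟫| ≤ ‖w‖ * ‖(T - A) w‖ := abs_real_inner_le_norm _ _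
      _ ≤ ‖w‖ * (ε * ‖w‖) := by gcongr; exact (T - A).le_of_opNorm_le hTA w
      _ = ε * ‖w‖ ^ 2 := by ring
  rw [sub_apply, inner_sub_right] at hdiff
  linarith [(abs_le.1 hdiff).1]

theorem LinearMap.IsSymmetric.inner_add_apply_neg_add_le {T : E →ₗ[ℝ] E} (hT : T.IsSymmetric)
    {a b : E} {ca cb : ℝ} (hab : ⟪a, b⟫ = 0) (ha : ca * ‖a‖ ^ 2 ≤ ⟪a, T a⟫)
    (hb : cb * ‖b‖ ^ 2 ≤ -⟪b, T b⟫) :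
    ⟪a + b, T (-a + b)⟫ ≤ -min ca cb * ‖a + b‖ ^ 2 := by
  have hcross : ⟪a, T b⟫ = ⟪b, T a⟫ := by rw [← hT, real_inner_comm]
  have hexpand : ⟪a + b, T (-a + b)⟫ = -⟪a, T a⟫ + ⟪b, T b⟫ := by
    simp only [map_add, map_neg, inner_add_left, inner_add_right, inner_neg_right, hcross]
    ring
  have hpyth : ‖a + b‖ ^ 2 = ‖a‖ ^ 2 + ‖b‖ ^ 2 := by rw [norm_add_sq_real, hab]; ring
  rw [hexpand, hpyth]
  nlinarith [min_le_left ca cb, min_le_right ca cb, sq_nonneg ‖a‖, sq_nonneg ‖b‖]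

end InnerProductSpace

section Hessian

variable {E : Type*} [NormedAddCommGroup E] [InnerProductSpace ℝ E] [CompleteSpace E]
  {f : E → ℝ} {z : E}

-- Over `ℝ` the conjugate-linear Riesz isomorphism is linear, so `gradient f` can be
-- differentiated as a composite with `fderiv ℝ f`.
theorem gradient_eq_toDual_symm_comp_fderiv :
    gradient f =
      ((toDual ℝ E).symm.toContinuousLinearEquiv.toContinuousLinearMap : StrongDual ℝ E →L[ℝ] E) ∘
        fderiv ℝ f :=
  rfl

theorem ContDiffAt.continuousAt_fderiv_gradient (hf : ContDiffAt ℝ 2 f z) :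
    ContinuousAt (fderiv ℝ (gradient f)) z := by
  rw [gradient_eq_toDual_symm_comp_fderiv]
  exact (ContinuousLinearMap.contDiff _).contDiffAt.comp z (hf.fderiv_right (m := 1) le_rfl)
    |>.continuousAt_fderiv one_ne_zero

theorem ContDiffAt.inner_fderiv_gradient (hf : ContDiffAt ℝ 2 f z) (v w : E) :
    ⟪v, fderiv ℝ (gradient f) z w⟫ = fderiv ℝ (fderiv ℝ f) z w v := by
  have hD : DifferentiableAt ℝ (fderiv ℝ f) z :=
    (hf.fderiv_right (m := 1) (by norm_num)).differentiableAt one_ne_zero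
  rw [gradient_eq_toDual_symm_comp_fderiv,
    ((ContinuousLinearMap.hasFDerivAt _).comp z hD.hasFDerivAt).fderiv, real_inner_comm]
  exact toDual_symm_apply

theorem ContDiffAt.isSymmetric_fderiv_gradient (hf : ContDiffAt ℝ 2 f z) :
    (fderiv ℝ (gradient f) z : E →ₗ[ℝ] E).IsSymmetric := fun v w => by
  simp only [ContinuousLinearMap.coe_coe]
  rw [real_inner_comm, hf.inner_fderiv_gradient, hf.inner_fderiv_gradient]
  exact hf.isSymmSndFDerivAt (by simp) v w

end Hessian

section Blocks

variable {ι κ : Type*}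

theorem EuclideanSpace.toLp_sumElim (u : ι → ℝ) (v : κ → ℝ) :
    WithLp.toLp 2 (Sum.elim u v) =
      WithLp.toLp 2 (Sum.elim u (0 : κ → ℝ)) + WithLp.toLp 2 (Sum.elim (0 : ι → ℝ) v) := by
  rw [← WithLp.toLp_add, ← Sum.elim_add_add, add_zero, zero_add]

theorem EuclideanSpace.toLp_sumElim_ofLp (w : EuclideanSpace ℝ (ι ⊕ κ)) :
    WithLp.toLp 2 (Sum.elim (fun i => w (.inl i)) fun j => w (.inr j)) = w :=
  congrArg (WithLp.toLp 2) (Sum.elim_comp_inl_inr w.ofLp)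

variable [Fintype ι] [Fintype κ]

theorem EuclideanSpace.inner_toLp_sumElim_zero (u : ι → ℝ) (v : κ → ℝ) :
    ⟪WithLp.toLp 2 (Sum.elim u (0 : κ → ℝ)), WithLp.toLp 2 (Sum.elim (0 : ι → ℝ) v)⟫ = 0 := by
  simp [PiLp.inner_apply, Fintype.sum_sum_type]

theorem EuclideanSpace.inner_apply_descent_ascent_le
    {T : EuclideanSpace ℝ (ι ⊕ κ) →L[ℝ] EuclideanSpace ℝ (ι ⊕ κ)}
    (hT : (T : EuclideanSpace ℝ (ι ⊕ κ) →ₗ[ℝ] EuclideanSpace ℝ (ι ⊕ κ)).IsSymmetric)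
    {u : ι → ℝ} {v : κ → ℝ} {ca cb : ℝ}
    (ha : ca * ‖WithLp.toLp 2 (Sum.elim u (0 : κ → ℝ))‖ ^ 2 ≤
      ⟪WithLp.toLp 2 (Sum.elim u (0 : κ → ℝ)), T (WithLp.toLp 2 (Sum.elim u (0 : κ → ℝ)))⟫)
    (hb : cb * ‖WithLp.toLp 2 (Sum.elim (0 : ι → ℝ) v)‖ ^ 2 ≤
      -⟪WithLp.toLp 2 (Sum.elim (0 : ι → ℝ) v), T (WithLp.toLp 2 (Sum.elim (0 : ι → ℝ) v))⟫) :
    ⟪WithLp.toLp 2 (Sum.elim u v), T (WithLp.toLp 2 (Sum.elim (-u) v))⟫ ≤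
      -min ca cb * ‖WithLp.toLp 2 (Sum.elim u v)‖ ^ 2 := by
  have key := hT.inner_add_apply_neg_add_le (inner_toLp_sumElim_zero u v) ha hb
  rwa [← toLp_sumElim, ← WithLp.toLp_neg, ← Sum.elim_neg_neg, neg_zero, ← toLp_sumElim] at key

end Blocks

/-- `ℝ^M × ℝ^N` is modelled as `EuclideanSpace ℝ (Fin M ⊕ Fin N)`, with the `Sum.inl`-coordinates
playing the role of `x` and the `Sum.inr`-coordinates that of `y`. -/
theorem stable_saddle_descent_ascent_bound_general (M N : ℕ)
    (f : EuclideanSpace ℝ (Fin M ⊕ Fin N) → ℝ)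
    (zstar : EuclideanSpace ℝ (Fin M ⊕ Fin N))
    (hf : ContDiffAt ℝ 2 f zstar)
    (emb : ((Fin M ⊕ Fin N) → ℝ) ≃ₗ[ℝ] EuclideanSpace ℝ (Fin M ⊕ Fin N))
    (hemb : emb = (EuclideanSpace.equiv (Fin M ⊕ Fin N) ℝ).symm)
    (hxx : ∀ u : Fin M → ℝ, u ≠ 0 →
      0 < ⟪emb (Sum.elim u 0), fderiv ℝ (gradient f) zstar (emb (Sum.elim u 0))⟫)
    (hyy : ∀ v : Fin N → ℝ, v ≠ 0 →
      ⟪emb (Sum.elim 0 v), fderiv ℝ (gradient f) zstar (emb (Sum.elim 0 v))⟫ < 0) :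
    ∃ r > 0, ∃ c > 0, ∀ z ∈ Metric.ball zstar r,
      ⟪gradient f z,
          fderiv ℝ (gradient f) z
            (emb (Sum.elim (fun i => -(gradient f z (Sum.inl i)))
              (fun j => gradient f z (Sum.inr j))))⟫ ≤
        -c * ‖gradient f z‖ ^ 2 := by
  set H := fderiv ℝ (gradient f)
  let toSum := (LinearEquiv.sumArrowLequivProdArrow (Fin M) (Fin N) ℝ ℝ).symm.toLinearMap
  obtain ⟨μx, hμx, hx⟩ := (emb.toLinearMap ∘ₗ toSum ∘ₗ LinearMap.inl ℝ _ _)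
    |>.exists_pos_mul_sq_norm_le_inner_apply_self (H zstar) hxx
  obtain ⟨μy, hμy, hy⟩ := (emb.toLinearMap ∘ₗ toSum ∘ₗ LinearMap.inr ℝ _ _)
    |>.exists_pos_mul_sq_norm_le_inner_apply_self (-H zstar)
      fun v hv => by rw [neg_apply, inner_neg_right]; exact neg_pos.2 (hyy v hv)
  set ε := min μx μy / 2 with hε_def
  have hε : 0 < ε := by positivity
  have hnear : ∀ᶠ z in 𝓝 zstar, ContDiffAt ℝ 2 f z ∧ H z ∈ Metric.closedBall (H zstar) ε :=
    (hf.eventually (by simp)).and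
      (hf.continuousAt_fderiv_gradient.eventually (Metric.closedBall_mem_nhds _ hε))
  obtain ⟨r, hr, hball⟩ := Metric.eventually_nhds_iff_ball.1 hnear
  refine ⟨r, hr, min (μx - ε) (μy - ε), ?_, fun z hz => ?_⟩
  · exact lt_min (by linarith [min_le_left μx μy]) (by linarith [min_le_right μx μy])
  obtain ⟨hfz, hHz⟩ := hball z hz
  rw [mem_closedBall_iff_norm] at hHz
  set g := gradient f z
  have hxz := le_inner_apply_self_of_norm_sub_le (hx fun i => g (.inl i)) hHz
  have hyz := le_inner_apply_self_of_norm_sub_le (T := -H z) (ε := ε) (hy fun j => g (.inr j))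
    (by rwa [neg_sub_neg, norm_sub_rev])
  rw [neg_apply, inner_neg_right] at hyz
  subst hemb
  have key := EuclideanSpace.inner_apply_descent_ascent_le hfz.isSymmetric_fderiv_gradient
    (u := fun i => g (.inl i)) (v := fun j => g (.inr j)) hxz hyz
  rwa [EuclideanSpace.toLp_sumElim_ofLp] at key

/-- Near a stable saddle point `z* = (x*,y*)` (zero gradient, `∇ₓₓf(z*) ≻ 0`,
`∇_yy f(z*) ≺ 0`) of a function C² near `z*`, there are `r > 0` and `c > 0` such
that for every `z` in the ball of radius `r` the descent-ascent direction
`d(z) = (-∇ₓf(z), ∇_y f(z))` satisfies `∇f(z)ᵀ∇²f(z)d(z) ≤ -c‖∇f(z)‖²`.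
The product space `ℝ^M × ℝ^N` is modelled as `EuclideanSpace ℝ (Fin M ⊕ Fin N)`,
with `Sum.inl`-coordinates playing the role of `x` and `Sum.inr` of `y`. -/
theorem stable_saddle_descent_ascent_bound (M N : ℕ)
    (f : EuclideanSpace ℝ (Fin M ⊕ Fin N) → ℝ)
    (zstar : EuclideanSpace ℝ (Fin M ⊕ Fin N))
    (hf : ContDiffAt ℝ 2 f zstar)
    (emb : ((Fin M ⊕ Fin N) → ℝ) ≃ₗ[ℝ] EuclideanSpace ℝ (Fin M ⊕ Fin N))
    (hemb : emb = (EuclideanSpace.equiv (Fin M ⊕ Fin N) ℝ).symm)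
    (hgrad : gradient f zstar = 0)
    (hxx : ∀ u : Fin M → ℝ, u ≠ 0 →
      0 < ⟪emb (Sum.elim u 0), fderiv ℝ (gradient f) zstar (emb (Sum.elim u 0))⟫)
    (hyy : ∀ v : Fin N → ℝ, v ≠ 0 →
      ⟪emb (Sum.elim 0 v), fderiv ℝ (gradient f) zstar (emb (Sum.elim 0 v))⟫ < 0) :
    ∃ r > 0, ∃ c > 0, ∀ z ∈ Metric.ball zstar r,
      ⟪gradient f z,
          fderiv ℝ (gradient f) z
            (emb (Sum.elim (fun i => -(gradient f z (Sum.inl i)))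
              (fun j => gradient f z (Sum.inr j))))⟫ ≤
        -c * ‖gradient f z‖ ^ 2 :=
  stable_saddle_descent_ascent_bound_general M N f zstar hf emb hemb hxx hyy
end
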